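/- Let q be a positive integer, p a prime dividing q, and write q_p = q/p. Let χ be a Dirichlet character modulo q_p, and let χ' be the Dirichlet character modulo q induced by χ (i.e. χ times the principal character modulo q). Then for every integer a with gcd(a,q) = 1: if p² does not divide q, then S(χ, ap) = φ(p)^{-1} · S(χ', ap²); and if p² divides q, then S(χ, ap) = p^{-1} · S(χ', ap²). -/

import Mathlib

/-- `S(χ,a) = ∑_{h=1}^{q} conj(χ)(h) e_q(a h²)` for a Dirichlet character χ mod q. -/
noncomputable def Schar {q : ℕ} (χ : DirichletCharacter ℂ q) (a : ℤ) : ℂ :=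
  ∑ h ∈ Finset.Icc 1 q,
    (starRingEnd ℂ) (χ (h : ZMod q)) *
      Complex.exp (2 * (Real.pi : ℂ) * Complex.I * ((a : ℂ) * (h : ℂ) ^ 2) / (q : ℂ))

/-- `B(q, (b₁,b₂,b₃,b₄); χ₁, χ₂, χ₃)
  = φ(q)⁻³ ∑_{1 ≤ a ≤ q, gcd(a,q)=1} S(χ₁,ab₁) S(χ₂,ab₂) S(χ₃,ab₃) e_q(−ab₄)`. -/
noncomputable def Bsum (q : ℕ) (b₁ b₂ b₃ b₄ : ℤ) (χ₁ χ₂ χ₃ : DirichletCharacter ℂ q) : ℂ :=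
  ((q.totient : ℂ))⁻¹ ^ 3 *
    ∑ a ∈ (Finset.Icc 1 q).filter (fun a => Nat.gcd a q = 1),
      Schar χ₁ ((a : ℤ) * b₁) * Schar χ₂ ((a : ℤ) * b₂) * Schar χ₃ ((a : ℤ) * b₃) *
        Complex.exp (-(2 * (Real.pi : ℂ) * Complex.I * ((a : ℂ) * (b₄ : ℂ)) / (q : ℂ)))

/-!
The characters vanish off the units, so both sums may be taken over units. For a unit `u`
modulo `q = p * m` with reduction `ū` modulo `m`, one has `χ'(u) = χ(ū)` and
`e_q(a p² u²) = e_m(a p ū²)`, so the summand of `S(χ', a p²)` factors through the surjection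
`(ZMod q)ˣ → (ZMod m)ˣ`, whose fibres all have `φ(q) / φ(m)` elements. Hence
`φ(m) S(χ', a p²) = φ(q) S(χ, a p)`, and `φ(p m) = φ(p) φ(m)` or `p φ(m)` according as
`p ∤ m` or `p ∣ m`.
-/

open Finset ComplexConjugate
open scoped Nat

lemma ZMod.sum_Icc_one_comp_natCast {M : Type*} [AddCommMonoid M] (m : ℕ) [NeZero m]
    (g : ZMod m → M) : ∑ h ∈ Icc 1 m, g h = ∑ x, g x := by
  refine sum_nbij' (fun h => (h : ZMod m)) (fun x => (x - 1).val + 1) (by simp)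
    (fun x _ => by simpa [Nat.succ_le_iff] using ZMod.val_lt (x - 1)) (fun h hh => ?_)
    (fun x _ => by simp) (fun _ _ => rfl)
  obtain ⟨h1, hm⟩ := mem_Icc.1 hh
  rw [← Nat.sub_add_cancel h1, Nat.cast_add, Nat.cast_one, add_sub_cancel_right,
    ZMod.val_cast_of_lt (by omega)]

lemma Fintype.sum_units_eq_sum {R M : Type*} [Monoid R] [Fintype R] [Fintype Rˣ]
    [AddCommMonoid M] (f : R → M) (hf : ∀ x, ¬ IsUnit x → f x = 0) :
    ∑ u : Rˣ, f u = ∑ x, f x := by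
  classical
  refine (sum_map univ ⟨Units.val, Units.val_injective⟩ f).symm.trans
    (Finset.sum_subset (subset_univ _) fun x _ hx => hf x ?_)
  rintro ⟨u, rfl⟩
  exact hx (mem_map_of_mem _ (mem_univ u))

lemma MonoidHom.sum_comp_of_surjective {G H M : Type*} [Group G] [Fintype G] [Group H]
    [Fintype H] [DecidableEq H] [AddCommMonoid M] (f : G →* H) (hf : Function.Surjective f)
    (F : H → M) : ∑ g, F (f g) = #{g | f g = 1} • ∑ h, F h := by
  rw [← sum_fiberwise univ f, smul_sum]
  refine sum_congr rfl fun h _ => ?_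
  rw [sum_congr rfl fun g hg => congrArg F (mem_filter.1 hg).2, sum_const,
    card_fiber_eq_of_mem_range f (hf h) (hf 1)]

lemma Schar_eq_sum_units {m : ℕ} [NeZero m] (χ : DirichletCharacter ℂ m) (a : ℤ) :
    Schar χ a =
      ∑ u : (ZMod m)ˣ, conj (χ u) * ZMod.stdAddChar ((a : ZMod m) * (u : ZMod m) ^ 2) := by
  symm
  refine (Fintype.sum_units_eq_sum
    (fun x : ZMod m => conj (χ x) * ZMod.stdAddChar ((a : ZMod m) * x ^ 2))
    fun x hx => by simp [χ.map_nonunit hx]).trans ?_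
  rw [Schar, ← ZMod.sum_Icc_one_comp_natCast m]
  refine sum_congr rfl fun h _ => ?_
  rw [← Int.cast_natCast (R := ZMod m), ← Int.cast_pow, ← Int.cast_mul, ZMod.stdAddChar_coe]
  push_cast
  rfl

lemma ZMod.stdAddChar_natCast_mul_eq_cast (d m : ℕ) [NeZero d] [NeZero m] (x : ZMod (d * m)) :
    stdAddChar ((d : ZMod (d * m)) * x) = stdAddChar (cast x : ZMod m) := by
  have hd : (d : ℂ) ≠ 0 := NeZero.ne _
  obtain ⟨k, rfl⟩ := intCast_surjective x
  rw [← Int.cast_natCast, ← Int.cast_mul, cast_intCast (dvd_mul_left m d), stdAddChar_coe,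
    stdAddChar_coe]
  congr 1
  push_cast
  field_simp

theorem totient_mul_Schar_changeLevel {m n : ℕ} [NeZero n] (d : ℕ) (hn : d * m = n)
    (hmn : m ∣ n) (χ : DirichletCharacter ℂ m) (a : ℤ) :
    (φ m : ℂ) * Schar (DirichletCharacter.changeLevel hmn χ) (a * d ^ 2) =
      φ n * Schar χ (a * d) := by
  subst hn
  have : NeZero d := ⟨left_ne_zero_of_mul (NeZero.ne (d * m))⟩
  have : NeZero m := ⟨right_ne_zero_of_mul (NeZero.ne (d * m))⟩
  have hf := ZMod.unitsMap_surjective hmn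
  have hcard : φ (d * m) = #{u | ZMod.unitsMap hmn u = 1} * φ m := by
    have := MonoidHom.sum_comp_of_surjective _ hf fun _ => (1 : ℕ)
    simpa only [sum_const, card_univ, smul_eq_mul, mul_one, ZMod.card_units_eq_totient] using this
  rw [Schar_eq_sum_units, Schar_eq_sum_units, hcard, Nat.cast_mul, mul_comm _ (φ m : ℂ),
    mul_assoc]
  congr 1
  rw [← nsmul_eq_mul, ← MonoidHom.sum_comp_of_surjective _ hf]
  refine sum_congr rfl fun u _ => ?_
  have hsq : ((a * d ^ 2 : ℤ) : ZMod (d * m)) * (u : ZMod (d * m)) ^ 2 =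
      d * ((a * d : ℤ) * (u : ZMod (d * m)) ^ 2) := by
    push_cast
    ring
  rw [DirichletCharacter.changeLevel_eq_cast_of_dvd, ZMod.unitsMap_val, hsq,
    ZMod.stdAddChar_natCast_mul_eq_cast, ZMod.cast_mul hmn, ZMod.cast_pow hmn,
    ZMod.cast_intCast hmn]

theorem Schar_lift_prime_general (q p : ℕ) (hp : p.Prime) (hpq : p ∣ q)
    (χ : DirichletCharacter ℂ (q / p)) (a : ℤ) :
    (¬ (p ^ 2 ∣ q) →
        Schar χ (a * (p : ℤ)) =
          ((p.totient : ℂ))⁻¹ *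
            Schar (DirichletCharacter.changeLevel (Nat.div_dvd_of_dvd hpq) χ)
              (a * (p : ℤ) ^ 2)) ∧
      ((p ^ 2 ∣ q) →
        Schar χ (a * (p : ℤ)) =
          ((p : ℂ))⁻¹ *
            Schar (DirichletCharacter.changeLevel (Nat.div_dvd_of_dvd hpq) χ)
              (a * (p : ℤ) ^ 2)) := by
  obtain rfl | hq := q.eq_zero_or_pos
  · simp [Schar]
  have : NeZero q := ⟨hq.ne'⟩
  have hqp : p * (q / p) = q := Nat.mul_div_cancel' hpq
  have hφm : (φ (q / p) : ℂ) ≠ 0 := by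
    exact_mod_cast (Nat.totient_pos.2 (Nat.div_pos (Nat.le_of_dvd hq hpq) hp.pos)).ne'
  have key := totient_mul_Schar_changeLevel p hqp (Nat.div_dvd_of_dvd hpq) χ a
  have lift : ∀ c : ℕ, c ≠ 0 → φ q = c * φ (q / p) → Schar χ (a * p) =
      (c : ℂ)⁻¹ * Schar (DirichletCharacter.changeLevel (Nat.div_dvd_of_dvd hpq) χ)
        (a * p ^ 2) := by
    intro c hc hφq
    rw [hφq, Nat.cast_mul, mul_comm (c : ℂ), mul_assoc, mul_right_inj' hφm] at key
    rw [key, inv_mul_cancel_left₀ (Nat.cast_ne_zero.2 hc)]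
  have hp_sq_dvd : p ^ 2 ∣ q ↔ p ∣ q / p := by
    rw [sq, Nat.dvd_div_iff_mul_dvd hpq]
  refine ⟨fun h => lift _ (Nat.totient_pos.2 hp.pos).ne' ?_, fun h => lift _ hp.ne_zero ?_⟩
  · rw [← Nat.totient_mul ((hp.coprime_iff_not_dvd).2 (hp_sq_dvd.not.1 h)), hqp]
  · rw [← Nat.totient_mul_of_prime_of_dvd hp (hp_sq_dvd.1 h), hqp]

/-- Let p ∣ q be prime, q_p = q/p, χ a Dirichlet character mod q_p and χ' the character
mod q induced by χ. For every integer a with gcd(a,q) = 1: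
if p² ∤ q then S(χ, ap) = φ(p)⁻¹ S(χ', ap²), and if p² ∣ q then S(χ, ap) = p⁻¹ S(χ', ap²). -/
theorem Schar_lift_prime (q p : ℕ) (hq : 0 < q) (hp : p.Prime) (hpq : p ∣ q)
    (χ : DirichletCharacter ℂ (q / p)) (a : ℤ) (ha : Int.gcd a q = 1) :
    (¬ (p ^ 2 ∣ q) →
        Schar χ (a * (p : ℤ)) =
          ((p.totient : ℂ))⁻¹ *
            Schar (DirichletCharacter.changeLevel (Nat.div_dvd_of_dvd hpq) χ)
              (a * (p : ℤ) ^ 2)) ∧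
      ((p ^ 2 ∣ q) →
        Schar χ (a * (p : ℤ)) =
          ((p : ℂ))⁻¹ *
            Schar (DirichletCharacter.changeLevel (Nat.div_dvd_of_dvd hpq) χ)
              (a * (p : ℤ) ^ 2)) :=
  Schar_lift_prime_general q p hp hpq χ a
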